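/- Let W : [0,1]² → [-1,1] be symmetric measurable, g ∈ L^∞[0,1], and let W_n, g_n be the step-function graphon and initial condition associated with a signed graph of size n and initial data g_n ∈ ℝⁿ. Let u and u_n be the classical solutions of the repelling graphon dynamics with data (W,g) and (W_n,g_n) respectively. Then for all t ∈ [0,T], ‖u(·,t) − u_n(·,t)‖₂ ≤ (‖g − g_n‖₂ + C_u ‖T_W − T_{W_n}‖_op)·e^{2T}, where C_u = ess sup over t ∈ [0,T], x ∈ [0,1] of |u(x,t)|. -/

import Mathlib

open MeasureTheory Set Filter Topology

noncomputable section

/-- The unit interval as a subset of ℝ. -/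
def I01 : Set ℝ := Set.Icc 0 1

/-- Lebesgue measure restricted to [0,1]. -/
def muI : MeasureTheory.Measure ℝ := MeasureTheory.volume.restrict I01

/-- The integral operator associated with a kernel `W`. -/
def Tk (W : ℝ → ℝ → ℝ) (f : ℝ → ℝ) : ℝ → ℝ :=
  fun x => ∫ y in I01, W x y * f y

/-- The L² norm on [0,1]. -/
def L2norm (f : ℝ → ℝ) : ℝ :=
  Real.sqrt (∫ x in I01, (f x) ^ 2)

/-- Membership in L²[0,1]. -/
def MemL2 (f : ℝ → ℝ) : Prop := MeasureTheory.MemLp f 2 muI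

/-- The L²→L² operator norm of the integral operator with kernel `W`. -/
def opNorm (W : ℝ → ℝ → ℝ) : ℝ :=
  sSup {c | ∃ f : ℝ → ℝ, MemL2 f ∧ L2norm f ≤ 1 ∧ c = L2norm (Tk W f)}

/-- Index of the interval `I_i = ((i-1)/n, i/n]` containing `x` (0-based). -/
def stepIdx (n : ℕ) (hn : 0 < n) (x : ℝ) : Fin n :=
  ⟨min (n - 1) (Nat.ceil ((n : ℝ) * x) - 1),
    lt_of_le_of_lt (min_le_left _ _) (Nat.sub_lt hn Nat.one_pos)⟩

/-- The step-function graphon associated with an `n × n` matrix. -/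
def stepKer {n : ℕ} (hn : 0 < n) (A : Fin n → Fin n → ℝ) : ℝ → ℝ → ℝ :=
  fun x y => A (stepIdx n hn x) (stepIdx n hn y)

/-- The step function on (0,1] associated with a vector. -/
def stepFun {n : ℕ} (hn : 0 < n) (v : Fin n → ℝ) : ℝ → ℝ :=
  fun x => v (stepIdx n hn x)

/-- `u` is a classical solution of the repelling graphon dynamics
`∂u/∂t(x,t) = ∫₀¹ W(x,y)(u(y,t) - u(x,t)) dy`, `u(·,0) = g`, as a C¹ curve
in L^∞([0,1]) (measurable in space, locally bounded, pointwise ODE). -/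
def IsRepellingSol (W : ℝ → ℝ → ℝ) (g : ℝ → ℝ) (u : ℝ → ℝ → ℝ) : Prop :=
  (∀ x ∈ I01, u x 0 = g x) ∧
  (∀ t : ℝ, 0 ≤ t → Measurable (fun x => u x t)) ∧
  (∀ T : ℝ, 0 < T → ∃ M : ℝ, ∀ x ∈ I01, ∀ t ∈ Set.Icc (0 : ℝ) T, |u x t| ≤ M) ∧
  (∀ x ∈ I01, ∀ t : ℝ, 0 ≤ t →
    HasDerivAt (u x) (∫ y in I01, W x y * (u y t - u x t)) t)

/-- `u` is a classical solution of the opposing (Altafini) graphon dynamics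
`∂u/∂t(x,t) = ∫₀¹ W(x,y)u(y,t) dy − (∫₀¹ |W(x,y)| dy) u(x,t)`, `u(·,0) = g`. -/
def IsOpposingSol (W : ℝ → ℝ → ℝ) (g : ℝ → ℝ) (u : ℝ → ℝ → ℝ) : Prop :=
  (∀ x ∈ I01, u x 0 = g x) ∧
  (∀ t : ℝ, 0 ≤ t → Measurable (fun x => u x t)) ∧
  (∀ T : ℝ, 0 < T → ∃ M : ℝ, ∀ x ∈ I01, ∀ t ∈ Set.Icc (0 : ℝ) T, |u x t| ≤ M) ∧
  (∀ x ∈ I01, ∀ t : ℝ, 0 ≤ t →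
    HasDerivAt (u x)
      ((∫ y in I01, W x y * u y t) - (∫ y in I01, |W x y|) * u x t) t)

/-- The essential supremum of `|u(x,t)|` over `(x,t) ∈ [0,1] × [0,T]`. -/
def CuT (u : ℝ → ℝ → ℝ) (T : ℝ) : ℝ :=
  (MeasureTheory.eLpNorm (fun p : ℝ × ℝ => u p.1 p.2) ⊤
    (muI.prod (MeasureTheory.volume.restrict (Set.Icc (0 : ℝ) T)))).toReal

lemma measurableSet_I01 : MeasurableSet I01 := measurableSet_Icc

instance : IsProbabilityMeasure (MeasureTheory.volume.restrict I01) := by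
  constructor
  rw [Measure.restrict_apply_univ]
  simp [I01]

instance : IsProbabilityMeasure muI := by
  unfold muI; infer_instance

lemma vol_I01 : ((MeasureTheory.volume I01).toReal : ℝ) = 1 := by simp [I01]

lemma ae_mem_I01 : ∀ᵐ x ∂(MeasureTheory.volume.restrict I01), x ∈ I01 :=
  ae_restrict_mem measurableSet_I01

/-- integrable from bounded & measurable -/
lemma intBdd {f : ℝ → ℝ} (hm : AEStronglyMeasurable f (volume.restrict I01)) {c : ℝ}
    (hb : ∀ᵐ x ∂(volume.restrict I01), |f x| ≤ c) :
    Integrable f (volume.restrict I01) := by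
  refine Integrable.mono' (integrable_const c) hm ?_
  simpa [Real.norm_eq_abs] using hb

lemma memL2Bdd {f : ℝ → ℝ} (hm : AEStronglyMeasurable f (volume.restrict I01)) {c : ℝ}
    (hb : ∀ᵐ x ∂(volume.restrict I01), |f x| ≤ c) :
    MemLp f 2 (volume.restrict I01) :=
  MemLp.of_bound hm c (by simpa [Real.norm_eq_abs] using hb)

lemma integral_sq_nonneg (f : ℝ → ℝ) : 0 ≤ ∫ x in I01, (f x)^2 :=
  integral_nonneg (fun x => sq_nonneg _)

lemma L2norm_nonneg (f : ℝ → ℝ) : 0 ≤ L2norm f := Real.sqrt_nonneg _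

lemma L2norm_le_of_bound {f : ℝ → ℝ} {c : ℝ} (hc : 0 ≤ c)
    (hb : ∀ᵐ x ∂(volume.restrict I01), |f x| ≤ c) : L2norm f ≤ c := by
  have h1 : ∫ x in I01, (f x)^2 ≤ ∫ _x in I01, c^2 := by
    refine integral_mono_of_nonneg (Eventually.of_forall fun x => sq_nonneg _)
      (integrable_const _) ?_
    filter_upwards [hb] with x hx
    calc (f x)^2 = |f x|^2 := (sq_abs _).symm
    _ ≤ c^2 := by exact pow_le_pow_left₀ (abs_nonneg _) hx 2
  have h2 : (∫ _x in I01, c^2 ∂volume) = c^2 := by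
    simp [vol_I01]
  rw [L2norm]
  calc Real.sqrt (∫ x in I01, (f x)^2) ≤ Real.sqrt (c^2) := by
        refine Real.sqrt_le_sqrt (h1.trans_eq h2)
  _ = c := by rw [Real.sqrt_sq hc]

lemma conj22 : Real.HolderConjugate 2 2 := Real.HolderConjugate.two_two

/-- Cauchy-Schwarz for nonnegative functions on I01. -/
lemma csint {f g : ℝ → ℝ} (hf : MemLp f 2 (volume.restrict I01))
    (hg : MemLp g 2 (volume.restrict I01))
    (hf0 : ∀ᵐ x ∂(volume.restrict I01), 0 ≤ f x)
    (hg0 : ∀ᵐ x ∂(volume.restrict I01), 0 ≤ g x) :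
    ∫ x in I01, f x * g x ≤ L2norm f * L2norm g := by
  have h2 : (ENNReal.ofReal (2:ℝ)) = 2 := by norm_num
  have := integral_mul_le_Lp_mul_Lq_of_nonneg conj22 hf0 hg0 (by rwa [h2]) (by rwa [h2])
  calc ∫ x in I01, f x * g x ≤
      (∫ x in I01, f x ^ (2:ℝ)) ^ ((1:ℝ)/2) * (∫ x in I01, g x ^ (2:ℝ)) ^ ((1:ℝ)/2) := this
  _ = L2norm f * L2norm g := by
      rw [L2norm, L2norm, Real.sqrt_eq_rpow, Real.sqrt_eq_rpow]
      norm_num [Real.rpow_natCast]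

lemma L2norm_abs (f : ℝ → ℝ) : L2norm (fun x => |f x|) = L2norm f := by
  simp [L2norm, sq_abs]

/-- Cauchy-Schwarz, absolute-value version. -/
lemma csabs {f g : ℝ → ℝ} (hfm : AEStronglyMeasurable f (volume.restrict I01))
    (hgm : AEStronglyMeasurable g (volume.restrict I01)) {cf cg : ℝ}
    (hbf : ∀ᵐ x ∂(volume.restrict I01), |f x| ≤ cf)
    (hbg : ∀ᵐ x ∂(volume.restrict I01), |g x| ≤ cg) :
    |∫ x in I01, f x * g x| ≤ L2norm f * L2norm g := by
  have h1 : |∫ x in I01, f x * g x| ≤ ∫ x in I01, |f x| * |g x| := by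
    simpa [Real.norm_eq_abs, abs_mul] using norm_integral_le_integral_norm
      (μ := volume.restrict I01) (fun x => f x * g x)
  have hfma : AEStronglyMeasurable (fun x => |f x|) (volume.restrict I01) := by
    simpa [Real.norm_eq_abs] using hfm.norm
  have hgma : AEStronglyMeasurable (fun x => |g x|) (volume.restrict I01) := by
    simpa [Real.norm_eq_abs] using hgm.norm
  have h3 : ∫ x in I01, |f x| * |g x| ≤ L2norm (fun x => |f x|) * L2norm (fun x => |g x|) := by
    refine csint (memL2Bdd hfma (by simpa [abs_abs] using hbf))
      (memL2Bdd hgma (by simpa [abs_abs] using hbg))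
      (Eventually.of_forall fun x => abs_nonneg _) (Eventually.of_forall fun x => abs_nonneg _)
  calc |∫ x in I01, f x * g x| ≤ _ := h1.trans h3
  _ = L2norm f * L2norm g := by rw [L2norm_abs, L2norm_abs]

lemma L2norm_sqrt_sq (f : ℝ → ℝ) : L2norm f = Real.sqrt (∫ x in I01, (f x)^2) := rfl

lemma L2norm_one : L2norm (fun _ : ℝ => (1:ℝ)) = 1 := by
  simp [L2norm, vol_I01]

/-- boundedness of Tk image for bounded kernels -/
lemma Tk_bdd {D : ℝ → ℝ → ℝ} (hD : ∀ x y, |D x y| ≤ 2) {f : ℝ → ℝ}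
    (hf : MemLp f 2 (volume.restrict I01)) (hf1 : L2norm f ≤ 1) (x : ℝ) :
    |Tk D f x| ≤ 2 := by
  have habs : ∫ y in I01, |f y| ≤ 1 := by
    have := csint hf.abs (memLp_const (1:ℝ))
      (Eventually.of_forall fun x => abs_nonneg _) (Eventually.of_forall fun x => zero_le_one)
    simp only [mul_one] at this
    calc ∫ y in I01, |f y| ≤ L2norm (fun x => |f x|) * L2norm (fun _ => (1:ℝ)) := this
    _ = L2norm f * 1 := by rw [L2norm_abs, L2norm_one]
    _ ≤ 1 := by rw [mul_one]; exact hf1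
  have h1 : |Tk D f x| ≤ ∫ y in I01, |D x y| * |f y| := by
    simpa [Real.norm_eq_abs, Tk, abs_mul] using norm_integral_le_integral_norm
      (μ := volume.restrict I01) (fun y => D x y * f y)
  have h2 : ∫ y in I01, |D x y| * |f y| ≤ ∫ y in I01, 2 * |f y| := by
    refine integral_mono_of_nonneg (Eventually.of_forall fun y => mul_nonneg (abs_nonneg _) (abs_nonneg _))
      ((hf.integrable (by norm_num)).abs.const_mul 2) ?_
    refine Eventually.of_forall fun y => ?_
    exact mul_le_mul_of_nonneg_right (hD x y) (abs_nonneg _)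
  calc |Tk D f x| ≤ ∫ y in I01, 2 * |f y| := h1.trans h2
  _ = 2 * ∫ y in I01, |f y| := by rw [integral_const_mul]
  _ ≤ 2 * 1 := by linarith
  _ = 2 := by norm_num

lemma opSet_bddAbove {D : ℝ → ℝ → ℝ} (hD : ∀ x y, |D x y| ≤ 2) :
    ∀ c ∈ {c | ∃ f : ℝ → ℝ, MemL2 f ∧ L2norm f ≤ 1 ∧ c = L2norm (Tk D f)}, c ≤ 2 := by
  rintro c ⟨f, hf, hf1, rfl⟩
  exact L2norm_le_of_bound (by norm_num)
    (Eventually.of_forall fun x => Tk_bdd hD hf hf1 x)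

lemma opNorm_nonneg {D : ℝ → ℝ → ℝ} (hD : ∀ x y, |D x y| ≤ 2) : 0 ≤ opNorm D := by
  have hmem : (0:ℝ) ∈ {c | ∃ f : ℝ → ℝ, MemL2 f ∧ L2norm f ≤ 1 ∧ c = L2norm (Tk D f)} := by
    refine ⟨fun _ => 0, MemLp.zero', by simp [L2norm], ?_⟩
    simp [L2norm, Tk]
  exact le_csSup ⟨2, fun c hc => opSet_bddAbove hD c hc⟩ hmem

lemma L2norm_const_mul (c : ℝ) (f : ℝ → ℝ) :
    L2norm (fun x => c * f x) = |c| * L2norm f := by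
  simp only [L2norm, mul_pow]
  rw [integral_const_mul, Real.sqrt_mul (sq_nonneg c), Real.sqrt_sq_eq_abs]

/-- operator norm bound for Tk applied to a bounded measurable function -/
lemma Tk_opBound {D : ℝ → ℝ → ℝ} (hD : ∀ x y, |D x y| ≤ 2) {f : ℝ → ℝ}
    (hfm : AEStronglyMeasurable f (volume.restrict I01)) {c : ℝ}
    (hfb : ∀ᵐ x ∂(volume.restrict I01), |f x| ≤ c) :
    L2norm (Tk D f) ≤ opNorm D * L2norm f := by
  have hbdd : BddAbove {c | ∃ f : ℝ → ℝ, MemL2 f ∧ L2norm f ≤ 1 ∧ c = L2norm (Tk D f)} :=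
    ⟨2, fun c hc => opSet_bddAbove hD c hc⟩
  have hfL2 : MemLp f 2 (volume.restrict I01) := memL2Bdd hfm hfb
  rcases eq_or_lt_of_le (L2norm_nonneg f) with h0 | hpos
  · -- L2norm f = 0, so f = 0 a.e., Tk D f = 0
    have hsq : ∫ x in I01, (f x)^2 = 0 := by
      have h1 : Real.sqrt (∫ x in I01, (f x)^2) = 0 := h0.symm
      have h2 := integral_sq_nonneg f
      rcases h2.eq_or_lt with h | h
      · exact h.symm
      · exfalso; rw [Real.sqrt_eq_zero' ] at h1; linarith
    have hae : f =ᵐ[volume.restrict I01] 0 := by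
      have hint : Integrable (fun x => (f x)^2) (volume.restrict I01) :=
        (hfL2.integrable_sq)
      have := (integral_eq_zero_iff_of_nonneg (fun x => sq_nonneg (f x)) hint).mp hsq
      filter_upwards [this] with x hx
      simpa [pow_eq_zero_iff] using hx
    have hTk : ∀ x, Tk D f x = 0 := by
      intro x
      rw [Tk]
      rw [integral_eq_zero_of_ae]
      filter_upwards [hae] with y hy
      simp [hy]
    have : L2norm (Tk D f) = 0 := by
      rw [L2norm]
      have : ∀ x, (Tk D f x)^2 = 0 := fun x => by rw [hTk x]; ring
      simp [this]
    rw [this, ← h0, mul_zero]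
  · set r := L2norm f with hr
    have hrinv : 0 < r⁻¹ := inv_pos.mpr hpos
    have hmem : r⁻¹ * L2norm (Tk D f) ∈
        {c | ∃ f : ℝ → ℝ, MemL2 f ∧ L2norm f ≤ 1 ∧ c = L2norm (Tk D f)} := by
      refine ⟨fun x => r⁻¹ * f x, ?_, ?_, ?_⟩
      · exact hfL2.const_mul _
      · rw [L2norm_const_mul, abs_of_pos hrinv, ← hr, inv_mul_cancel₀ (ne_of_gt hpos)]
      · have : Tk D (fun x => r⁻¹ * f x) = fun x => r⁻¹ * Tk D f x := by
          funext x
          rw [Tk, Tk]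
          rw [← integral_const_mul]
          congr 1; funext y; ring
        rw [this, L2norm_const_mul, abs_of_pos hrinv]
    have := le_csSup hbdd hmem
    rw [opNorm] at *
    calc L2norm (Tk D f) = r * (r⁻¹ * L2norm (Tk D f)) := by
          field_simp
    _ ≤ r * sSup {c | ∃ f : ℝ → ℝ, MemL2 f ∧ L2norm f ≤ 1 ∧ c = L2norm (Tk D f)} :=
        mul_le_mul_of_nonneg_left this (le_of_lt hpos)
    _ = _ * r := mul_comm _ _


lemma CuT_nonneg (u : ℝ → ℝ → ℝ) (T : ℝ) : 0 ≤ CuT u T := ENNReal.toReal_nonneg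

lemma Cu_ae_bound (u : ℝ → ℝ → ℝ) (T : ℝ) (hT : 0 < T)
    (hmeas : ∀ t : ℝ, 0 ≤ t → Measurable (fun x => u x t))
    (hcont : ∀ x ∈ I01, ∀ t : ℝ, 0 ≤ t → ContinuousAt (u x) t)
    (hbd : ∃ M, ∀ x ∈ I01, ∀ t ∈ Icc (0:ℝ) T, |u x t| ≤ M) :
    ∀ t ∈ Icc (0:ℝ) T, ∀ᵐ x ∂(volume.restrict I01), |u x t| ≤ CuT u T := by
  obtain ⟨M, hM⟩ := hbd
  set C := CuT u T with hC
  -- the jointly measurable modification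
  set w : ℝ → ℝ → ℝ := fun t x => I01.indicator (fun x' => u x' (max t 0)) x with hw
  have hmax : Continuous fun t : ℝ => max t 0 := continuous_id.max continuous_const
  have hwcont : ∀ x, Continuous fun t => w t x := by
    intro x
    by_cases hx : x ∈ I01
    · simp only [hw, Set.indicator_of_mem hx]
      rw [continuous_iff_continuousAt]
      intro t₀
      show ContinuousAt ((u x) ∘ (fun t => max t 0)) t₀
      exact ContinuousAt.comp (x := t₀) (hcont x hx (max t₀ 0) (le_max_right _ _))
        hmax.continuousAt
    · simp only [hw, Set.indicator_of_notMem hx]; exact continuous_const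
  have hwmeas : ∀ t, Measurable (w t) := by
    intro t
    exact (hmeas (max t 0) (le_max_right _ _)).indicator measurableSet_I01
  have hWjoint : Measurable (Function.uncurry w) :=
    measurable_uncurry_of_continuous_of_measurable hwcont hwmeas
  set μP := muI.prod (volume.restrict (Icc (0:ℝ) T)) with hμP
  have hprodres : μP = (volume.prod volume).restrict (I01 ×ˢ Icc (0:ℝ) T) := by
    rw [hμP]; show (volume.restrict I01).prod _ = _
    rw [Measure.prod_restrict]
  have hae_mem : ∀ᵐ p ∂μP, p.1 ∈ I01 ∧ p.2 ∈ Icc (0:ℝ) T := by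
    rw [hprodres]
    filter_upwards [ae_restrict_mem (measurableSet_I01.prod measurableSet_Icc)] with p hp
    exact ⟨hp.1, hp.2⟩
  have hb : ∀ᵐ p ∂μP, ‖u p.1 p.2‖ ≤ M := by
    filter_upwards [hae_mem] with p hp
    simpa [Real.norm_eq_abs] using hM p.1 hp.1 p.2 hp.2
  have hfin : eLpNormEssSup (fun p : ℝ × ℝ => u p.1 p.2) μP ≠ ⊤ :=
    ne_of_lt (eLpNormEssSup_lt_top_of_ae_bound hb)
  have hCle : ∀ᵐ p ∂μP, |u p.1 p.2| ≤ C := by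
    filter_upwards [ae_le_eLpNormEssSup (f := fun p : ℝ × ℝ => u p.1 p.2) (μ := μP)] with p hp
    have := ENNReal.toReal_mono hfin hp
    rw [hC, CuT, eLpNorm_exponent_top]
    simpa [Real.norm_eq_abs] using this
  have hww : ∀ᵐ p ∂μP, |w p.2 p.1| ≤ C := by
    filter_upwards [hae_mem, hCle] with p hp hple
    have : w p.2 p.1 = u p.1 p.2 := by
      simp only [hw, Set.indicator_of_mem hp.1, max_eq_left hp.2.1]
    rw [this]; exact hple
  have hswap : ∀ᵐ t ∂(volume.restrict (Icc (0:ℝ) T)), ∀ᵐ x ∂(volume.restrict I01),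
      |w t x| ≤ C := by
    have h1 : ∀ᵐ x ∂muI, ∀ᵐ t ∂(volume.restrict (Icc (0:ℝ) T)), |w t x| ≤ C :=
      Measure.ae_ae_of_ae_prod hww
    have hms : MeasurableSet {q : ℝ × ℝ | |w q.2 q.1| ≤ C} := by
      have : Measurable fun q : ℝ × ℝ => |w q.2 q.1| :=
        (hWjoint.comp measurable_swap).abs
      exact measurableSet_le this measurable_const
    have := (Measure.ae_ae_comm (μ := muI) (ν := volume.restrict (Icc (0:ℝ) T))
      (p := fun x t => |w t x| ≤ C) ?_).mp h1
    · exact this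
    · exact hms
  intro t ht
  -- choose good times converging to t
  have hseq : ∀ k : ℕ, ∃ s : ℝ, (∀ᵐ x ∂(volume.restrict I01), |w s x| ≤ C) ∧
      s ∈ Icc (0:ℝ) T ∧ |s - t| < 1/(k+1) := by
    intro k
    by_contra hcon
    push_neg at hcon
    set δ : ℝ := 1/(k+1) with hδ
    have hδpos : 0 < δ := by positivity
    set J := Ioo (max 0 (t - δ)) (min T (t + δ)) with hJ
    have hJsub : J ⊆ {s | ¬ (∀ᵐ x ∂(volume.restrict I01), |w s x| ≤ C)} ∩ Icc (0:ℝ) T := by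
      intro s hs
      have hs1 : s ∈ Icc (0:ℝ) T :=
        ⟨le_of_lt (lt_of_le_of_lt (le_max_left _ _) hs.1),
         le_of_lt (lt_of_lt_of_le hs.2 (min_le_left _ _))⟩
      have hs2 : |s - t| < δ := by
        rw [abs_lt]
        constructor
        · have := lt_of_le_of_lt (le_max_right 0 (t - δ)) hs.1; linarith
        · have := lt_of_lt_of_le hs.2 (min_le_right T (t + δ)); linarith
      exact ⟨fun hae => absurd hs2 (not_lt.mpr (hcon s hae hs1)), hs1⟩
    have hnull : volume ({s | ¬ (∀ᵐ x ∂(volume.restrict I01), |w s x| ≤ C)} ∩ Icc (0:ℝ) T) = 0 := by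
      have := hswap
      rw [ae_iff] at this
      rwa [Measure.restrict_apply' measurableSet_Icc] at this
    have hJ0 : volume J = 0 := measure_mono_null hJsub hnull
    have hlt : max 0 (t - δ) < min T (t + δ) := by
      rw [max_lt_iff] at *
      constructor
      · rw [lt_min_iff]; exact ⟨hT, by have := ht.1; linarith⟩
      · rw [lt_min_iff]; exact ⟨by have := ht.2; linarith, by linarith⟩
    rw [hJ, Real.volume_Ioo] at hJ0
    have : (0:ℝ) < min T (t + δ) - max 0 (t - δ) := by linarith
    rw [ENNReal.ofReal_eq_zero] at hJ0
    linarith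
  choose s hs1 hs2 hs3 using hseq
  have htends : Tendsto s atTop (𝓝 t) := by
    rw [tendsto_iff_dist_tendsto_zero]
    refine squeeze_zero (fun k => dist_nonneg) (fun k => ?_) tendsto_one_div_add_atTop_nhds_zero_nat
    rw [Real.dist_eq]
    exact le_of_lt (hs3 k)
  have hae : ∀ᵐ x ∂(volume.restrict I01), x ∈ I01 ∧ ∀ k : ℕ, |w (s k) x| ≤ C := by
    refine (ae_restrict_mem measurableSet_I01).and ?_
    rw [ae_all_iff]
    exact hs1
  filter_upwards [hae] with x hx
  obtain ⟨hxI, hxk⟩ := hx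
  have hwk : ∀ k, w (s k) x = u x (s k) := by
    intro k
    simp only [hw, Set.indicator_of_mem hxI, max_eq_left (hs2 k).1]
  have hconv : Tendsto (fun k => u x (s k)) atTop (𝓝 (u x t)) :=
    (hcont x hxI t ht.1).tendsto.comp htends
  have : Tendsto (fun k => |u x (s k)|) atTop (𝓝 (|u x t|)) :=
    (continuous_abs.tendsto _).comp hconv
  refine le_of_tendsto this ?_
  filter_upwards with k
  rw [← hwk k]; exact hxk k


def RF (W u : ℝ → ℝ → ℝ) (x s : ℝ) : ℝ := ∫ y in I01, W x y * (u y s - u x s)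

def psiF (u1 u2 : ℝ → ℝ → ℝ) (s : ℝ) : ℝ := ∫ x in I01, (u1 x s - u2 x s)^2

def psiD (W1 W2 u1 u2 : ℝ → ℝ → ℝ) (s : ℝ) : ℝ :=
  ∫ x in I01, 2 * (u1 x s - u2 x s) * (RF W1 u1 x s - RF W2 u2 x s)

lemma psiF_nonneg (u1 u2 : ℝ → ℝ → ℝ) (s : ℝ) : 0 ≤ psiF u1 u2 s :=
  integral_nonneg fun x => sq_nonneg _

lemma RF_meas {W u : ℝ → ℝ → ℝ} (hW : Measurable (Function.uncurry W)) {s : ℝ}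
    (hus : Measurable (fun x => u x s)) : Measurable (fun x => RF W u x s) := by
  have hm : Measurable (fun p : ℝ × ℝ => W p.1 p.2 * (u p.2 s - u p.1 s)) :=
    hW.mul ((hus.comp measurable_snd).sub (hus.comp measurable_fst))
  have hm2 : StronglyMeasurable (Function.uncurry fun x y => W x y * (u y s - u x s)) :=
    hm.stronglyMeasurable
  exact (hm2.integral_prod_right (ν := volume.restrict I01)).measurable

lemma RF_bdd {W u : ℝ → ℝ → ℝ} (hWb : ∀ x y, |W x y| ≤ 1) {s M x : ℝ}
    (hub : ∀ y ∈ I01, |u y s| ≤ M) (hx : x ∈ I01) : |RF W u x s| ≤ 2*M := by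
  have h : ‖∫ y in I01, W x y * (u y s - u x s)‖ ≤ (2*M) * (volume I01).toReal := by
    refine norm_setIntegral_le_of_norm_le_const ?_ ?_
    · rw [I01, Real.volume_Icc]; exact ENNReal.ofReal_lt_top
    · intro y hy
      rw [Real.norm_eq_abs, abs_mul]
      calc |W x y| * |u y s - u x s| ≤ 1 * (|u y s| + |u x s|) :=
            mul_le_mul (hWb x y) (abs_sub _ _) (abs_nonneg _) zero_le_one
      _ ≤ 1 * (M + M) := by
            have h1 := hub y hy; have h2 := hub x hx
            nlinarith
      _ = 2*M := by ring
  rw [Real.norm_eq_abs, vol_I01, mul_one] at h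
  exact h

lemma Mb_nonneg {u1 : ℝ → ℝ → ℝ} {T Mb : ℝ} (hT : 0 < T)
    (hb1 : ∀ x ∈ I01, ∀ s ∈ Icc (0:ℝ) (T+1), |u1 x s| ≤ Mb) : 0 ≤ Mb := by
  have h0 : (0:ℝ) ∈ I01 := by constructor <;> norm_num
  have ht : (0:ℝ) ∈ Icc (0:ℝ) (T+1) := by constructor <;> linarith
  exact le_trans (abs_nonneg _) (hb1 0 h0 0 ht)


lemma psi_deriv {W1 W2 : ℝ → ℝ → ℝ} {g1 g2 : ℝ → ℝ} {u1 u2 : ℝ → ℝ → ℝ} {T Mb : ℝ}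
    (hT : 0 < T)
    (hW1m : Measurable (Function.uncurry W1)) (hW2m : Measurable (Function.uncurry W2))
    (hW1b : ∀ x y, |W1 x y| ≤ 1) (hW2b : ∀ x y, |W2 x y| ≤ 1)
    (hu1 : IsRepellingSol W1 g1 u1) (hu2 : IsRepellingSol W2 g2 u2)
    (hb1 : ∀ x ∈ I01, ∀ s ∈ Icc (0:ℝ) (T+1), |u1 x s| ≤ Mb)
    (hb2 : ∀ x ∈ I01, ∀ s ∈ Icc (0:ℝ) (T+1), |u2 x s| ≤ Mb) :
    ∀ s₀ ∈ Ioc (0:ℝ) T, HasDerivAt (psiF u1 u2) (psiD W1 W2 u1 u2 s₀) s₀ := by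
  obtain ⟨hu10, hu1m, _, hu1ode⟩ := hu1
  obtain ⟨hu20, hu2m, _, hu2ode⟩ := hu2
  have hMb : 0 ≤ Mb := Mb_nonneg hT hb1
  intro s₀ hs₀
  have hεpos : (0:ℝ) < min s₀ 1 := lt_min hs₀.1 one_pos
  have hball : ∀ s ∈ Metric.ball s₀ (min s₀ 1), 0 < s ∧ s ∈ Icc (0:ℝ) (T+1) := by
    intro s hs
    rw [Metric.mem_ball, Real.dist_eq, abs_lt] at hs
    have h1 : 0 < s := by have := hs.1; have := min_le_left s₀ 1; linarith
    have h2 : s ≤ T + 1 := by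
      have := hs.2; have := min_le_right s₀ 1; have := hs₀.2; linarith
    exact ⟨h1, ⟨h1.le, h2⟩⟩
  have hvm : ∀ s : ℝ, 0 ≤ s → Measurable (fun x => u1 x s - u2 x s) :=
    fun s hs => (hu1m s hs).sub (hu2m s hs)
  have hvb : ∀ s ∈ Icc (0:ℝ) (T+1), ∀ x ∈ I01, |u1 x s - u2 x s| ≤ 2*Mb := by
    intro s hs x hx
    have h1 := hb1 x hx s hs; have h2 := hb2 x hx s hs
    calc |u1 x s - u2 x s| ≤ |u1 x s| + |u2 x s| := abs_sub _ _
    _ ≤ 2*Mb := by linarith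
  have key := hasDerivAt_integral_of_dominated_loc_of_deriv_le
    (F := fun s x => (u1 x s - u2 x s)^2)
    (F' := fun s x => 2 * (u1 x s - u2 x s) * (RF W1 u1 x s - RF W2 u2 x s))
    (bound := fun _ => 16*Mb^2) (μ := volume.restrict I01) (x₀ := s₀) (Metric.ball_mem_nhds s₀ hεpos)
    ?_ ?_ ?_ ?_ ?_ ?_
  · exact key.2
  · -- eventual measurability
    filter_upwards [eventually_gt_nhds hs₀.1] with s hs
    exact (((hvm s hs.le).pow_const 2)).aestronglyMeasurable
  · -- integrability at s₀
    refine intBdd ((hvm s₀ hs₀.1.le).pow_const 2).aestronglyMeasurable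
      (c := (2*Mb)^2) ?_
    filter_upwards [ae_mem_I01] with x hx
    have hv := hvb s₀ ⟨hs₀.1.le, by linarith [hs₀.2]⟩ x hx
    calc |(u1 x s₀ - u2 x s₀)^2| = |u1 x s₀ - u2 x s₀|^2 := abs_pow _ 2
    _ ≤ (2*Mb)^2 := pow_le_pow_left₀ (abs_nonneg _) hv 2
  · -- F' measurable at s₀
    exact ((measurable_const.mul (hvm s₀ hs₀.1.le)).mul
      ((RF_meas hW1m (hu1m s₀ hs₀.1.le)).sub
        (RF_meas hW2m (hu2m s₀ hs₀.1.le)))).aestronglyMeasurable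
  · -- bound on F'
    filter_upwards [ae_mem_I01] with x hx
    intro s hsb
    obtain ⟨hspos, hsIcc⟩ := hball s hsb
    have hv := hvb s hsIcc x hx
    have hR1 : |RF W1 u1 x s| ≤ 2*Mb := RF_bdd hW1b (fun y hy => hb1 y hy s hsIcc) hx
    have hR2 : |RF W2 u2 x s| ≤ 2*Mb := RF_bdd hW2b (fun y hy => hb2 y hy s hsIcc) hx
    have hΔ : |RF W1 u1 x s - RF W2 u2 x s| ≤ 4*Mb := by
      calc |RF W1 u1 x s - RF W2 u2 x s| ≤ |RF W1 u1 x s| + |RF W2 u2 x s| := abs_sub _ _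
      _ ≤ 4*Mb := by linarith
    rw [Real.norm_eq_abs, abs_mul, abs_mul, abs_two]
    have hmm : |u1 x s - u2 x s| * |RF W1 u1 x s - RF W2 u2 x s| ≤ (2*Mb)*(4*Mb) :=
      mul_le_mul hv hΔ (abs_nonneg _) (by linarith)
    nlinarith [abs_nonneg (u1 x s - u2 x s), abs_nonneg (RF W1 u1 x s - RF W2 u2 x s)]
  · exact integrable_const _
  · -- differentiability
    filter_upwards [ae_mem_I01] with x hx
    intro s hsb
    obtain ⟨hspos, _⟩ := hball s hsb
    have h1 := hu1ode x hx s hspos.le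
    have h2 := hu2ode x hx s hspos.le
    have hd : HasDerivAt (fun s => u1 x s - u2 x s) (RF W1 u1 x s - RF W2 u2 x s) s :=
      h1.sub h2
    have hsq := hd.fun_pow 2
    refine hsq.congr_deriv ?_
    push_cast
    ring

lemma psi_cont0 {W1 W2 : ℝ → ℝ → ℝ} {g1 g2 : ℝ → ℝ} {u1 u2 : ℝ → ℝ → ℝ} {T Mb : ℝ}
    (hT : 0 < T)
    (hu1 : IsRepellingSol W1 g1 u1) (hu2 : IsRepellingSol W2 g2 u2)
    (hb1 : ∀ x ∈ I01, ∀ s ∈ Icc (0:ℝ) (T+1), |u1 x s| ≤ Mb)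
    (hb2 : ∀ x ∈ I01, ∀ s ∈ Icc (0:ℝ) (T+1), |u2 x s| ≤ Mb) :
    ContinuousWithinAt (psiF u1 u2) (Ici (0:ℝ)) 0 := by
  obtain ⟨_, hu1m, _, hu1ode⟩ := hu1
  obtain ⟨_, hu2m, _, hu2ode⟩ := hu2
  have hev : ∀ᶠ s in 𝓝[Ici (0:ℝ)] 0, s ∈ Icc (0:ℝ) (T+1) := by
    filter_upwards [self_mem_nhdsWithin,
      eventually_nhdsWithin_of_eventually_nhds
        (eventually_lt_nhds (by linarith : (0:ℝ) < T+1))] with s h1 h2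
    exact ⟨h1, h2.le⟩
  refine continuousWithinAt_of_dominated (bound := fun _ => (2*Mb)^2) ?_ ?_ ?_ ?_
  · filter_upwards [hev] with s hs
    exact (((hu1m s hs.1).sub (hu2m s hs.1)).pow_const 2).aestronglyMeasurable
  · filter_upwards [hev] with s hs
    filter_upwards [ae_mem_I01] with x hx
    have h1 := hb1 x hx s hs; have h2 := hb2 x hx s hs
    have hv : |u1 x s - u2 x s| ≤ 2*Mb := by
      calc |u1 x s - u2 x s| ≤ |u1 x s| + |u2 x s| := abs_sub _ _
      _ ≤ 2*Mb := by linarith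
    rw [Real.norm_eq_abs]
    calc |(u1 x s - u2 x s)^2| = |u1 x s - u2 x s|^2 := abs_pow _ 2
    _ ≤ (2*Mb)^2 := pow_le_pow_left₀ (abs_nonneg _) hv 2
  · exact integrable_const _
  · filter_upwards [ae_mem_I01] with x hx
    have h1 := (hu1ode x hx 0 le_rfl).continuousAt
    have h2 := (hu2ode x hx 0 le_rfl).continuousAt
    exact (((h1.sub h2).pow 2)).continuousWithinAt

lemma int_constI (c : ℝ) : (∫ _y in I01, c ∂volume) = c := by simp

lemma paramInt_meas {K : ℝ → ℝ → ℝ} (hK : Measurable (fun p : ℝ × ℝ => K p.1 p.2)) :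
    Measurable (fun x => ∫ y in I01, K x y) := by
  have hm2 : StronglyMeasurable (Function.uncurry K) := hK.stronglyMeasurable
  exact (hm2.integral_prod_right (ν := volume.restrict I01)).measurable

lemma paramInt_bdd {K : ℝ → ℝ → ℝ} {c x : ℝ} (hK : ∀ y ∈ I01, |K x y| ≤ c) :
    |∫ y in I01, K x y| ≤ c := by
  have h : ‖∫ y in I01, K x y‖ ≤ c * (volume I01).toReal := by
    refine norm_setIntegral_le_of_norm_le_const ?_ ?_
    · rw [I01, Real.volume_Icc]; exact ENNReal.ofReal_lt_top
    · intro y hy; rw [Real.norm_eq_abs]; exact hK y hy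
  rwa [Real.norm_eq_abs, vol_I01, mul_one] at h

lemma psiD_bound {W1 W2 : ℝ → ℝ → ℝ} {g1 g2 : ℝ → ℝ} {u1 u2 : ℝ → ℝ → ℝ} {T Mb : ℝ}
    (hT : 0 < T)
    (hW1m : Measurable (Function.uncurry W1)) (hW2m : Measurable (Function.uncurry W2))
    (hW1b : ∀ x y, |W1 x y| ≤ 1) (hW2b : ∀ x y, |W2 x y| ≤ 1)
    (hu1 : IsRepellingSol W1 g1 u1) (hu2 : IsRepellingSol W2 g2 u2)
    (hb1 : ∀ x ∈ I01, ∀ s ∈ Icc (0:ℝ) (T+1), |u1 x s| ≤ Mb)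
    (hb2 : ∀ x ∈ I01, ∀ s ∈ Icc (0:ℝ) (T+1), |u2 x s| ≤ Mb) :
    ∀ s ∈ Ioc (0:ℝ) T, |psiD W1 W2 u1 u2 s| ≤
      4 * psiF u1 u2 s +
      4 * (CuT u1 T * opNorm (fun x y => W1 x y - W2 x y)) * Real.sqrt (psiF u1 u2 s) := by
  obtain ⟨hu10, hu1m, _, hu1ode⟩ := hu1
  obtain ⟨hu20, hu2m, _, hu2ode⟩ := hu2
  have hMb : 0 ≤ Mb := Mb_nonneg hT hb1
  have hCuae0 := Cu_ae_bound u1 T hT hu1m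
    (fun x hx t ht => (hu1ode x hx t ht).continuousAt)
    ⟨Mb, fun x hx t ht => hb1 x hx t ⟨ht.1, by linarith [ht.2]⟩⟩
  intro s hs
  have hsIcc : s ∈ Icc (0:ℝ) (T+1) := ⟨hs.1.le, by linarith [hs.2]⟩
  have hsT : s ∈ Icc (0:ℝ) T := ⟨hs.1.le, hs.2⟩
  set Cu := CuT u1 T with hCudef
  have hCu0 : 0 ≤ Cu := CuT_nonneg u1 T
  have hCuae : ∀ᵐ x ∂(volume.restrict I01), |u1 x s| ≤ Cu := hCuae0 s hsT
  set D : ℝ → ℝ → ℝ := fun x y => W1 x y - W2 x y with hDdef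
  have hD2 : ∀ x y, |D x y| ≤ 2 := by
    intro x y
    calc |D x y| ≤ |W1 x y| + |W2 x y| := abs_sub _ _
    _ ≤ 2 := by linarith [hW1b x y, hW2b x y]
  have hDm : Measurable (fun p : ℝ × ℝ => D p.1 p.2) := hW1m.sub hW2m
  set op := opNorm D with hopdef
  have hop0 : 0 ≤ op := opNorm_nonneg hD2
  set ψs := psiF u1 u2 s with hψdef
  have hψ0 : 0 ≤ ψs := psiF_nonneg u1 u2 s
  set vs : ℝ → ℝ := fun x => u1 x s - u2 x s with hvs
  have hvsm : Measurable vs := (hu1m s hs.1.le).sub (hu2m s hs.1.le)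
  have hvsb : ∀ x ∈ I01, |vs x| ≤ 2*Mb := by
    intro x hx
    calc |vs x| ≤ |u1 x s| + |u2 x s| := abs_sub _ _
    _ ≤ 2*Mb := by linarith [hb1 x hx s hsIcc, hb2 x hx s hsIcc]
  have hvsae : ∀ᵐ x ∂(volume.restrict I01), |vs x| ≤ 2*Mb := by
    filter_upwards [ae_mem_I01] with x hx; exact hvsb x hx
  have hψs : ψs = ∫ x in I01, (vs x)^2 := rfl
  have hL2vs : L2norm vs = Real.sqrt ψs := rfl
  have hu1sm : Measurable (fun x => u1 x s) := hu1m s hs.1.le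
  have hu1sbM : ∀ x ∈ I01, |u1 x s| ≤ Mb := fun x hx => hb1 x hx s hsIcc
  have hu1sMae : ∀ᵐ x ∂(volume.restrict I01), |u1 x s| ≤ Mb := by
    filter_upwards [ae_mem_I01] with x hx; exact hu1sbM x hx
  -- the three fields
  set A' : ℝ → ℝ := fun x => ∫ y in I01, W2 x y * (vs y - vs x) with hA'
  set B1 : ℝ → ℝ := fun x => ∫ y in I01, D x y * u1 y s with hB1
  set dD : ℝ → ℝ := fun x => ∫ y in I01, D x y with hdD
  have hAm : Measurable A' :=
    paramInt_meas (K := fun x y => W2 x y * (vs y - vs x))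
      (hW2m.mul ((hvsm.comp measurable_snd).sub (hvsm.comp measurable_fst)))
  have hB1m : Measurable B1 :=
    paramInt_meas (K := fun x y => D x y * u1 y s) (hDm.mul (hu1sm.comp measurable_snd))
  have hdDm : Measurable dD := paramInt_meas hDm
  have hB1b : ∀ x, |B1 x| ≤ 2*Mb := by
    intro x
    simp only [hB1]
    refine paramInt_bdd (K := fun x y => D x y * u1 y s) (x := x) fun y hy => ?_
    rw [abs_mul]
    have : |D x y| * |u1 y s| ≤ 2 * Mb :=
      mul_le_mul (hD2 x y) (hu1sbM y hy) (abs_nonneg _) (by norm_num)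
    exact this
  have hdDb : ∀ x, |dD x| ≤ 2 := by
    intro x
    simp only [hdD]
    exact paramInt_bdd (K := D) (x := x) fun y _ => hD2 x y
  have hAb : ∀ x ∈ I01, |A' x| ≤ 4*Mb := by
    intro x hx
    simp only [hA']
    refine paramInt_bdd (K := fun x y => W2 x y * (vs y - vs x)) (x := x) fun y hy => ?_
    rw [abs_mul]
    have h1 : |vs y - vs x| ≤ 4*Mb := by
      calc |vs y - vs x| ≤ |vs y| + |vs x| := abs_sub _ _
      _ ≤ 4*Mb := by linarith [hvsb y hy, hvsb x hx]
    calc |W2 x y| * |vs y - vs x| ≤ 1 * (4*Mb) :=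
      mul_le_mul (hW2b x y) h1 (abs_nonneg _) zero_le_one
    _ = 4*Mb := one_mul _
  set Ia := (∫ x in I01, |vs x|) with hIa
  have hIa0 : 0 ≤ Ia := integral_nonneg fun x => abs_nonneg _
  have hvsabs_int : Integrable (fun x => |vs x|) (volume.restrict I01) :=
    intBdd hvsm.abs.aestronglyMeasurable (by simpa [abs_abs] using hvsae)
  have hAb2 : ∀ x, |A' x| ≤ Ia + |vs x| := by
    intro x
    have h1 : |A' x| ≤ ∫ y in I01, |W2 x y| * |vs y - vs x| := by
      simpa [hA', Real.norm_eq_abs, abs_mul] using norm_integral_le_integral_norm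
        (μ := volume.restrict I01) (fun y => W2 x y * (vs y - vs x))
    have h2 : (∫ y in I01, |W2 x y| * |vs y - vs x|) ≤ ∫ y in I01, (|vs y| + |vs x|) := by
      refine integral_mono_of_nonneg
        (Eventually.of_forall fun y => mul_nonneg (abs_nonneg _) (abs_nonneg _))
        (hvsabs_int.add (integrable_const _)) ?_
      refine Eventually.of_forall fun y => ?_
      calc |W2 x y| * |vs y - vs x| ≤ 1 * (|vs y| + |vs x|) :=
        mul_le_mul (hW2b x y) (abs_sub _ _) (abs_nonneg _) zero_le_one
      _ = |vs y| + |vs x| := one_mul _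
    have h3 : (∫ y in I01, (|vs y| + |vs x|)) = Ia + |vs x| := by
      rw [integral_add hvsabs_int (integrable_const _), int_constI]
    linarith [h1.trans (h2.trans_eq h3)]
  have hIale : Ia ≤ Real.sqrt ψs := by
    have := csint (memL2Bdd hvsm.abs.aestronglyMeasurable (by simpa [abs_abs] using hvsae))
      (memLp_const (1:ℝ)) (Eventually.of_forall fun x => abs_nonneg _)
      (Eventually.of_forall fun x => zero_le_one)
    simp only [mul_one] at this
    calc Ia ≤ L2norm (fun x => |vs x|) * L2norm (fun _ => (1:ℝ)) := this
    _ = L2norm vs := by rw [L2norm_abs, L2norm_one, mul_one]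
    _ = Real.sqrt ψs := hL2vs
  have hIa2 : Ia * Ia ≤ ψs := by
    calc Ia * Ia ≤ Real.sqrt ψs * Real.sqrt ψs := mul_le_mul hIale hIale hIa0 (Real.sqrt_nonneg _)
    _ = ψs := Real.mul_self_sqrt hψ0
  have hDu : Measurable (Function.uncurry D) := hDm
  have hvx : ∀ x, u1 x s - u2 x s = vs x := fun x => rfl
  -- pointwise decomposition of the difference of vector fields
  have hpt : ∀ x, RF W1 u1 x s - RF W2 u2 x s = A' x + (B1 x - u1 x s * dD x) := by
    intro x
    have hi1 : Integrable (fun y => W1 x y * (u1 y s - u1 x s)) (volume.restrict I01) := by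
      refine intBdd ((hW1m.of_uncurry_left.mul (hu1sm.sub measurable_const))).aestronglyMeasurable
        (c := Mb + |u1 x s|) ?_
      filter_upwards [ae_mem_I01] with y hy
      rw [abs_mul]
      calc |W1 x y| * |u1 y s - u1 x s| ≤ 1 * (Mb + |u1 x s|) := by
            refine mul_le_mul (hW1b x y) ?_ (abs_nonneg _) zero_le_one
            calc |u1 y s - u1 x s| ≤ |u1 y s| + |u1 x s| := abs_sub _ _
            _ ≤ Mb + |u1 x s| := by linarith [hu1sbM y hy]
      _ = Mb + |u1 x s| := one_mul _
    have hi2 : Integrable (fun y => W2 x y * (u2 y s - u2 x s)) (volume.restrict I01) := by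
      refine intBdd ((hW2m.of_uncurry_left.mul
        ((hu2m s hs.1.le).sub measurable_const))).aestronglyMeasurable
        (c := Mb + |u2 x s|) ?_
      filter_upwards [ae_mem_I01] with y hy
      rw [abs_mul]
      calc |W2 x y| * |u2 y s - u2 x s| ≤ 1 * (Mb + |u2 x s|) := by
            refine mul_le_mul (hW2b x y) ?_ (abs_nonneg _) zero_le_one
            calc |u2 y s - u2 x s| ≤ |u2 y s| + |u2 x s| := abs_sub _ _
            _ ≤ Mb + |u2 x s| := by linarith [hb2 y hy s hsIcc]
      _ = Mb + |u2 x s| := one_mul _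
    have hiA : Integrable (fun y => W2 x y * (vs y - vs x)) (volume.restrict I01) := by
      refine intBdd ((hW2m.of_uncurry_left.mul (hvsm.sub measurable_const))).aestronglyMeasurable
        (c := 2*Mb + |vs x|) ?_
      filter_upwards [ae_mem_I01] with y hy
      rw [abs_mul]
      calc |W2 x y| * |vs y - vs x| ≤ 1 * (2*Mb + |vs x|) := by
            refine mul_le_mul (hW2b x y) ?_ (abs_nonneg _) zero_le_one
            calc |vs y - vs x| ≤ |vs y| + |vs x| := abs_sub _ _
            _ ≤ 2*Mb + |vs x| := by linarith [hvsb y hy]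
      _ = 2*Mb + |vs x| := one_mul _
    have hiB : Integrable (fun y => D x y * u1 y s) (volume.restrict I01) := by
      refine intBdd ((hDu.of_uncurry_left.mul hu1sm)).aestronglyMeasurable (c := 2*Mb) ?_
      filter_upwards [ae_mem_I01] with y hy
      rw [abs_mul]
      exact mul_le_mul (hD2 x y) (hu1sbM y hy) (abs_nonneg _) (by norm_num)
    have hiC : Integrable (fun y => D x y * u1 x s) (volume.restrict I01) := by
      refine intBdd ((hDu.of_uncurry_left.mul measurable_const)).aestronglyMeasurable
        (c := 2*|u1 x s|) ?_
      filter_upwards with y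
      rw [abs_mul]
      exact mul_le_mul_of_nonneg_right (hD2 x y) (abs_nonneg _)
    have e1 : A' x = ∫ y in I01, W2 x y * (vs y - vs x) := by simp only [hA']
    have e2 : B1 x = ∫ y in I01, D x y * u1 y s := by simp only [hB1]
    have e3 : dD x = ∫ y in I01, D x y := by simp only [hdD]
    have e4 : (∫ y in I01, D x y) * u1 x s = ∫ y in I01, D x y * u1 x s :=
      (integral_mul_const _ _).symm
    have step1 : RF W1 u1 x s - RF W2 u2 x s
        = ∫ y in I01, (W1 x y * (u1 y s - u1 x s) - W2 x y * (u2 y s - u2 x s)) := by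
      simp only [RF]
      exact (integral_sub hi1 hi2).symm
    have step2 : (∫ y in I01, (W1 x y * (u1 y s - u1 x s) - W2 x y * (u2 y s - u2 x s)))
        = ∫ y in I01, (W2 x y * (vs y - vs x) + (D x y * u1 y s - D x y * u1 x s)) := by
      refine integral_congr_ae (Eventually.of_forall fun y => ?_)
      simp only [hvs, hDdef]; ring
    have step3 : (∫ y in I01, (W2 x y * (vs y - vs x) + (D x y * u1 y s - D x y * u1 x s)))
        = (∫ y in I01, W2 x y * (vs y - vs x)) +
          ∫ y in I01, (D x y * u1 y s - D x y * u1 x s) :=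
      integral_add hiA (hiB.sub hiC)
    have step4 : (∫ y in I01, (D x y * u1 y s - D x y * u1 x s))
        = (∫ y in I01, D x y * u1 y s) - ∫ y in I01, D x y * u1 x s :=
      integral_sub hiB hiC
    rw [step1, step2, step3, step4, e1, e2, e3, mul_comm (u1 x s), e4]
  -- integrability of the three products
  have hIvA : Integrable (fun x => vs x * A' x) (volume.restrict I01) := by
    refine intBdd (hvsm.mul hAm).aestronglyMeasurable (c := (2*Mb)*(4*Mb)) ?_
    filter_upwards [ae_mem_I01] with x hx
    rw [abs_mul]
    exact mul_le_mul (hvsb x hx) (hAb x hx) (abs_nonneg _) (by linarith)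
  have hIvB1 : Integrable (fun x => vs x * B1 x) (volume.restrict I01) := by
    refine intBdd (hvsm.mul hB1m).aestronglyMeasurable (c := (2*Mb)*(2*Mb)) ?_
    filter_upwards [ae_mem_I01] with x hx
    rw [abs_mul]
    exact mul_le_mul (hvsb x hx) (hB1b x) (abs_nonneg _) (by linarith)
  have hIvB2 : Integrable (fun x => vs x * (u1 x s * dD x)) (volume.restrict I01) := by
    refine intBdd (hvsm.mul (hu1sm.mul hdDm)).aestronglyMeasurable (c := (2*Mb)*(Mb*2)) ?_
    filter_upwards [ae_mem_I01] with x hx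
    rw [abs_mul, abs_mul]
    refine mul_le_mul (hvsb x hx) ?_ (mul_nonneg (abs_nonneg _) (abs_nonneg _)) (by linarith)
    exact mul_le_mul (hu1sbM x hx) (hdDb x) (abs_nonneg _) hMb
  -- split the derivative integral
  have hsplit : psiD W1 W2 u1 u2 s =
      2 * ((∫ x in I01, vs x * A' x) +
        ((∫ x in I01, vs x * B1 x) - ∫ x in I01, vs x * (u1 x s * dD x))) := by
    simp only [psiD]
    calc (∫ x in I01, 2 * (u1 x s - u2 x s) * (RF W1 u1 x s - RF W2 u2 x s))
        = ∫ x in I01, (2 * (vs x * A' x) +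
            (2 * (vs x * B1 x) - 2 * (vs x * (u1 x s * dD x)))) := by
          refine integral_congr_ae (Eventually.of_forall fun x => ?_)
          show 2 * (u1 x s - u2 x s) * (RF W1 u1 x s - RF W2 u2 x s)
              = 2 * (vs x * A' x) + (2 * (vs x * B1 x) - 2 * (vs x * (u1 x s * dD x)))
          rw [hvx x, hpt x]; ring
    _ = (∫ x in I01, 2 * (vs x * A' x)) +
          ((∫ x in I01, 2 * (vs x * B1 x)) - ∫ x in I01, 2 * (vs x * (u1 x s * dD x))) := by
          have sp1 : (∫ x in I01, (2 * (vs x * A' x) +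
              (2 * (vs x * B1 x) - 2 * (vs x * (u1 x s * dD x)))))
              = (∫ x in I01, 2 * (vs x * A' x)) +
                ∫ x in I01, (2 * (vs x * B1 x) - 2 * (vs x * (u1 x s * dD x))) :=
            integral_add (hIvA.const_mul 2) ((hIvB1.const_mul 2).sub (hIvB2.const_mul 2))
          have sp2 : (∫ x in I01, (2 * (vs x * B1 x) - 2 * (vs x * (u1 x s * dD x))))
              = (∫ x in I01, 2 * (vs x * B1 x)) - ∫ x in I01, 2 * (vs x * (u1 x s * dD x)) :=
            integral_sub (hIvB1.const_mul 2) (hIvB2.const_mul 2)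
          rw [sp1, sp2]
    _ = _ := by
          have m1 : (∫ x in I01, 2 * (vs x * A' x)) = 2 * ∫ x in I01, vs x * A' x :=
            integral_const_mul 2 _
          have m2 : (∫ x in I01, 2 * (vs x * B1 x)) = 2 * ∫ x in I01, vs x * B1 x :=
            integral_const_mul 2 _
          have m3 : (∫ x in I01, 2 * (vs x * (u1 x s * dD x)))
              = 2 * ∫ x in I01, vs x * (u1 x s * dD x) := integral_const_mul 2 _
          rw [m1, m2, m3]; ring
  -- bound 1
  have hvssq_int : Integrable (fun x => |vs x|^2) (volume.restrict I01) := by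
    refine intBdd (hvsm.abs.pow_const 2).aestronglyMeasurable (c := (2*Mb)^2) ?_
    filter_upwards [ae_mem_I01] with x hx
    calc |(|vs x|)^2| = |vs x|^2 := by rw [abs_pow, abs_abs]
    _ ≤ (2*Mb)^2 := pow_le_pow_left₀ (abs_nonneg _) (hvsb x hx) 2
  have hT1 : |∫ x in I01, vs x * A' x| ≤ 2 * ψs := by
    have h1 : |∫ x in I01, vs x * A' x| ≤ ∫ x in I01, |vs x| * |A' x| := by
      simpa [Real.norm_eq_abs, abs_mul] using norm_integral_le_integral_norm
        (μ := volume.restrict I01) (fun x => vs x * A' x)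
    have h2 : (∫ x in I01, |vs x| * |A' x|) ≤ ∫ x in I01, (|vs x| * Ia + |vs x|^2) := by
      refine integral_mono_of_nonneg
        (Eventually.of_forall fun x => mul_nonneg (abs_nonneg _) (abs_nonneg _))
        ((hvsabs_int.mul_const Ia).add hvssq_int) ?_
      refine Eventually.of_forall fun x => ?_
      calc |vs x| * |A' x| ≤ |vs x| * (Ia + |vs x|) :=
            mul_le_mul_of_nonneg_left (hAb2 x) (abs_nonneg _)
      _ = |vs x| * Ia + |vs x|^2 := by ring
    have h3 : (∫ x in I01, (|vs x| * Ia + |vs x|^2)) = Ia * Ia + ψs := by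
      have h3a : (∫ x in I01, (|vs x| * Ia + |vs x|^2))
          = (∫ x in I01, |vs x| * Ia) + ∫ x in I01, |vs x|^2 :=
        integral_add (hvsabs_int.mul_const Ia) hvssq_int
      have h3b : (∫ x in I01, |vs x| * Ia) = (∫ x in I01, |vs x|) * Ia :=
        integral_mul_const Ia _
      rw [h3a, h3b, ← hIa]
      congr 1
      rw [hψs]
      refine integral_congr_ae (Eventually.of_forall fun x => ?_)
      simp only [sq_abs]
    calc |∫ x in I01, vs x * A' x| ≤ Ia * Ia + ψs := h1.trans (h2.trans_eq h3)
    _ ≤ 2 * ψs := by linarith [hIa2]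
  -- bound 2
  have hT2 : |∫ x in I01, vs x * B1 x| ≤ (Cu * op) * Real.sqrt ψs := by
    have h1 := csabs hvsm.aestronglyMeasurable hB1m.aestronglyMeasurable hvsae
      (Eventually.of_forall hB1b)
    have hTkeq : B1 = Tk D (fun y => u1 y s) := by
      funext x; simp only [hB1]; rfl
    have h3 : L2norm (Tk D (fun y => u1 y s)) ≤ op * L2norm (fun y => u1 y s) := by
      rw [hopdef]
      exact Tk_opBound hD2 hu1sm.aestronglyMeasurable hu1sMae
    have h4 : L2norm (fun y => u1 y s) ≤ Cu := L2norm_le_of_bound hCu0 hCuae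
    have h2 : L2norm B1 ≤ op * Cu := by
      rw [hTkeq]
      calc L2norm (Tk D (fun y => u1 y s)) ≤ op * L2norm (fun y => u1 y s) := h3
      _ ≤ op * Cu := mul_le_mul_of_nonneg_left h4 hop0
    calc |∫ x in I01, vs x * B1 x| ≤ L2norm vs * L2norm B1 := h1
    _ ≤ Real.sqrt ψs * (op * Cu) := by
        rw [hL2vs]
        exact mul_le_mul_of_nonneg_left h2 (Real.sqrt_nonneg _)
    _ = (Cu * op) * Real.sqrt ψs := by ring
  -- bound 3
  have hdDabs_int : Integrable (fun x => |vs x| * |dD x|) (volume.restrict I01) := by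
    refine intBdd (hvsm.abs.mul hdDm.abs).aestronglyMeasurable (c := (2*Mb)*2) ?_
    filter_upwards [ae_mem_I01] with x hx
    rw [abs_mul, abs_abs, abs_abs]
    exact mul_le_mul (hvsb x hx) (hdDb x) (abs_nonneg _) (by linarith)
  have hT3 : |∫ x in I01, vs x * (u1 x s * dD x)| ≤ (Cu * op) * Real.sqrt ψs := by
    have h1 : |∫ x in I01, vs x * (u1 x s * dD x)| ≤
        ∫ x in I01, |vs x| * (|u1 x s| * |dD x|) := by
      simpa [Real.norm_eq_abs, abs_mul] using norm_integral_le_integral_norm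
        (μ := volume.restrict I01) (fun x => vs x * (u1 x s * dD x))
    have h2 : (∫ x in I01, |vs x| * (|u1 x s| * |dD x|)) ≤
        ∫ x in I01, Cu * (|vs x| * |dD x|) := by
      refine integral_mono_of_nonneg
        (Eventually.of_forall fun x =>
          mul_nonneg (abs_nonneg _) (mul_nonneg (abs_nonneg _) (abs_nonneg _)))
        (hdDabs_int.const_mul Cu) ?_
      filter_upwards [hCuae] with x hCx
      calc |vs x| * (|u1 x s| * |dD x|) ≤ |vs x| * (Cu * |dD x|) :=
            mul_le_mul_of_nonneg_left
              (mul_le_mul_of_nonneg_right hCx (abs_nonneg _)) (abs_nonneg _)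
      _ = Cu * (|vs x| * |dD x|) := by ring
    have h3 : (∫ x in I01, Cu * (|vs x| * |dD x|)) = Cu * ∫ x in I01, |vs x| * |dD x| :=
      integral_const_mul _ _
    have h4 : (∫ x in I01, |vs x| * |dD x|) ≤ Real.sqrt ψs * L2norm dD := by
      have := csint (memL2Bdd hvsm.abs.aestronglyMeasurable (by simpa [abs_abs] using hvsae))
        (memL2Bdd hdDm.abs.aestronglyMeasurable
          (Eventually.of_forall fun x => by rw [abs_abs]; exact hdDb x))
        (Eventually.of_forall fun x => abs_nonneg _)
        (Eventually.of_forall fun x => abs_nonneg _)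
      calc (∫ x in I01, |vs x| * |dD x|) ≤
          L2norm (fun x => |vs x|) * L2norm (fun x => |dD x|) := this
      _ = L2norm vs * L2norm dD := by rw [L2norm_abs, L2norm_abs]
      _ = Real.sqrt ψs * L2norm dD := by rw [hL2vs]
    have h5 : L2norm dD ≤ op := by
      have hTkdD : Tk D (fun _ => (1:ℝ)) = dD := by
        funext x; simp only [hdD, Tk, mul_one]
      have := Tk_opBound hD2 aestronglyMeasurable_const (c := 1)
        (f := fun _ => (1:ℝ)) (Eventually.of_forall fun x => by norm_num)
      rw [hTkdD, L2norm_one, mul_one] at this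
      rw [hopdef]; exact this
    calc |∫ x in I01, vs x * (u1 x s * dD x)| ≤ Cu * ∫ x in I01, |vs x| * |dD x| := by
          rw [← h3]; exact h1.trans h2
    _ ≤ Cu * (Real.sqrt ψs * L2norm dD) := by
          refine mul_le_mul_of_nonneg_left h4 hCu0
    _ ≤ Cu * (Real.sqrt ψs * op) := by
          refine mul_le_mul_of_nonneg_left
            (mul_le_mul_of_nonneg_left h5 (Real.sqrt_nonneg _)) hCu0
    _ = (Cu * op) * Real.sqrt ψs := by ring
  -- combine
  rw [hsplit, abs_mul, abs_two]
  have habs : |(∫ x in I01, vs x * A' x) +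
      ((∫ x in I01, vs x * B1 x) - ∫ x in I01, vs x * (u1 x s * dD x))| ≤
      |∫ x in I01, vs x * A' x| +
      (|∫ x in I01, vs x * B1 x| + |∫ x in I01, vs x * (u1 x s * dD x)|) := by
    refine (abs_add_le _ _).trans ?_
    have := abs_sub (∫ x in I01, vs x * B1 x) (∫ x in I01, vs x * (u1 x s * dD x))
    linarith
  nlinarith [hT1, hT2, hT3, habs, abs_nonneg ((∫ x in I01, vs x * A' x) +
    ((∫ x in I01, vs x * B1 x) - ∫ x in I01, vs x * (u1 x s * dD x)))]


lemma master {W1 W2 : ℝ → ℝ → ℝ} {g1 g2 : ℝ → ℝ} {u1 u2 : ℝ → ℝ → ℝ} {T : ℝ}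
    (hT : 0 < T)
    (hW1m : Measurable (Function.uncurry W1)) (hW2m : Measurable (Function.uncurry W2))
    (hW1b : ∀ x y, |W1 x y| ≤ 1) (hW2b : ∀ x y, |W2 x y| ≤ 1)
    (hu1 : IsRepellingSol W1 g1 u1) (hu2 : IsRepellingSol W2 g2 u2) :
    ∀ t ∈ Icc (0:ℝ) T, L2norm (fun x => u1 x t - u2 x t) ≤
      (L2norm (fun x => g1 x - g2 x) +
        CuT u1 T * opNorm (fun x y => W1 x y - W2 x y)) * Real.exp (2*T) := by
  obtain ⟨M1, hM1⟩ := hu1.2.2.1 (T+1) (by linarith)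
  obtain ⟨M2, hM2⟩ := hu2.2.2.1 (T+1) (by linarith)
  have hb1 : ∀ x ∈ I01, ∀ s ∈ Icc (0:ℝ) (T+1), |u1 x s| ≤ max M1 M2 :=
    fun x hx s hs => (hM1 x hx s hs).trans (le_max_left _ _)
  have hb2 : ∀ x ∈ I01, ∀ s ∈ Icc (0:ℝ) (T+1), |u2 x s| ≤ max M1 M2 :=
    fun x hx s hs => (hM2 x hx s hs).trans (le_max_right _ _)
  have hD2 : ∀ x y, |W1 x y - W2 x y| ≤ 2 := by
    intro x y
    calc |W1 x y - W2 x y| ≤ |W1 x y| + |W2 x y| := abs_sub _ _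
    _ ≤ 2 := by linarith [hW1b x y, hW2b x y]
  set C := CuT u1 T * opNorm (fun x y => W1 x y - W2 x y) with hCdef
  have hC0 : 0 ≤ C := mul_nonneg (CuT_nonneg _ _) (opNorm_nonneg hD2)
  have hψd := psi_deriv hT hW1m hW2m hW1b hW2b hu1 hu2 hb1 hb2
  have hψb := psiD_bound hT hW1m hW2m hW1b hW2b hu1 hu2 hb1 hb2
  have hψc := psi_cont0 hT hu1 hu2 hb1 hb2
  have hψ0 : ∀ s, 0 ≤ psiF u1 u2 s := psiF_nonneg u1 u2
  have hg : Real.sqrt (psiF u1 u2 0) = L2norm (fun x => g1 x - g2 x) := by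
    have he : psiF u1 u2 0 = ∫ x in I01, (g1 x - g2 x)^2 := by
      refine setIntegral_congr_fun measurableSet_I01 fun x hx => ?_
      rw [hu1.1 x hx, hu2.1 x hx]
    rw [L2norm, he]
  have hL2t : ∀ t : ℝ, L2norm (fun x => u1 x t - u2 x t) = Real.sqrt (psiF u1 u2 t) :=
    fun t => rfl
  intro t ht
  rcases eq_or_lt_of_le ht.1 with h0 | htpos
  · -- t = 0
    rw [hL2t, ← h0, hg]
    have h1 : (1:ℝ) ≤ Real.exp (2*T) := by
      rw [← Real.exp_zero]
      exact Real.exp_le_exp.mpr (by linarith)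
    nlinarith [L2norm_nonneg (fun x => g1 x - g2 x)]
  · -- 0 < t
    have claim : ∀ η : ℝ, 0 < η → Real.sqrt (psiF u1 u2 t) ≤
        (Real.sqrt (psiF u1 u2 0) + Real.sqrt η + C) * Real.exp (2*t) := by
      intro η hη
      set f : ℝ → ℝ := fun s => Real.sqrt (psiF u1 u2 s + η) with hf
      set f' : ℝ → ℝ := fun s => psiD W1 W2 u1 u2 s / (2 * Real.sqrt (psiF u1 u2 s + η))
        with hf'
      have hfpos : ∀ s, 0 < psiF u1 u2 s + η :=
        fun s => add_pos_of_nonneg_of_pos (hψ0 s) hη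
      have hfnn : ∀ s, 0 ≤ f s := fun s => Real.sqrt_nonneg _
      have hfd : ∀ s ∈ Ioc (0:ℝ) T, HasDerivAt f (f' s) s := by
        intro s hs
        have h1 : HasDerivAt (fun s => psiF u1 u2 s + η) (psiD W1 W2 u1 u2 s) s :=
          (hψd s hs).add_const η
        exact h1.sqrt (ne_of_gt (hfpos s))
      have hfb : ∀ s ∈ Ioc (0:ℝ) T, |f' s| ≤ 2 * f s + 2*C := by
        intro s hs
        have ha : 0 < Real.sqrt (psiF u1 u2 s + η) := Real.sqrt_pos.mpr (hfpos s)
        have ha2 : Real.sqrt (psiF u1 u2 s + η)^2 = psiF u1 u2 s + η :=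
          Real.sq_sqrt (hfpos s).le
        have haψ : Real.sqrt (psiF u1 u2 s) ≤ Real.sqrt (psiF u1 u2 s + η) :=
          Real.sqrt_le_sqrt (by linarith)
        have hbd := hψb s hs
        rw [hf']
        rw [abs_div, abs_of_pos (by positivity : (0:ℝ) < 2 * Real.sqrt (psiF u1 u2 s + η))]
        rw [div_le_iff₀ (by positivity)]
        have hfseq : f s = Real.sqrt (psiF u1 u2 s + η) := rfl
        rw [hfseq]
        nlinarith [Real.sqrt_nonneg (psiF u1 u2 s), hψ0 s, hC0]
      -- Gronwall on [t/(k+2), t]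
      have hkey : ∀ k : ℕ, f t ≤ f (t/(k+2)) * Real.exp (2*(t - t/(k+2))) +
          C * (Real.exp (2*(t - t/(k+2))) - 1) := by
        intro k
        set sk := t/(k+2) with hsk
        have hskpos : 0 < sk := by positivity
        have hskt : sk ≤ t := by
          rw [hsk, div_le_iff₀ (by positivity)]
          nlinarith
        have hsub : ∀ s, s ∈ Icc sk t → s ∈ Ioc (0:ℝ) T :=
          fun s hs => ⟨lt_of_lt_of_le hskpos hs.1, hs.2.trans ht.2⟩
        have hcont : ContinuousOn f (Icc sk t) :=
          fun s hs => ((hfd s (hsub s hs)).continuousAt).continuousWithinAt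
        have hderiv : ∀ s ∈ Ico sk t, HasDerivWithinAt f (f' s) (Ici s) s :=
          fun s hs => (hfd s (hsub s ⟨hs.1, hs.2.le⟩)).hasDerivWithinAt
        have hinit : ‖f sk‖ ≤ f sk := le_of_eq (Real.norm_of_nonneg (hfnn sk))
        have hbound : ∀ s ∈ Ico sk t, ‖f' s‖ ≤ 2 * ‖f s‖ + 2*C := by
          intro s hs
          rw [Real.norm_eq_abs, Real.norm_eq_abs, abs_of_nonneg (hfnn s)]
          exact hfb s (hsub s ⟨hs.1, hs.2.le⟩)
        have hgron := norm_le_gronwallBound_of_norm_deriv_right_le hcont hderiv hinit hbound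
          t ⟨hskt, le_rfl⟩
        rw [Real.norm_of_nonneg (hfnn t), gronwallBound_of_K_ne_0 two_ne_zero] at hgron
        have he : 2*C/2 = C := by ring
        calc f t ≤ f sk * Real.exp (2*(t - sk)) + 2*C/2 * (Real.exp (2*(t - sk)) - 1) :=
              hgron
        _ = f sk * Real.exp (2*(t - sk)) + C * (Real.exp (2*(t - sk)) - 1) := by rw [he]
      -- limit k → ∞
      have hsk0 : Tendsto (fun k : ℕ => t/(k+2)) atTop (𝓝 0) := by
        refine Tendsto.div_atTop tendsto_const_nhds ?_
        exact tendsto_atTop_add_const_right _ 2 tendsto_natCast_atTop_atTop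
      have hsk0' : Tendsto (fun k : ℕ => t/(k+2)) atTop (𝓝[Ici 0] 0) := by
        refine tendsto_nhdsWithin_of_tendsto_nhds_of_eventually_within _ hsk0 ?_
        filter_upwards with k
        simp only [mem_Ici]
        positivity
      have hfc0 : ContinuousWithinAt f (Ici 0) 0 := by
        have h1 : ContinuousWithinAt (fun s => psiF u1 u2 s + η) (Ici (0:ℝ)) 0 :=
          hψc.add continuousWithinAt_const
        exact Real.continuous_sqrt.continuousAt.comp_continuousWithinAt h1
      have hfsk : Tendsto (fun k : ℕ => f (t/(k+2))) atTop (𝓝 (f 0)) :=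
        hfc0.tendsto.comp hsk0'
      have hexp : Tendsto (fun k : ℕ => Real.exp (2*(t - t/(k+2)))) atTop
          (𝓝 (Real.exp (2*t))) := by
        have h1 : Tendsto (fun k : ℕ => 2*(t - t/(k+2))) atTop (𝓝 (2*t)) := by
          have := (tendsto_const_nhds (x := t) (f := atTop (α := ℕ))).sub hsk0
          rw [sub_zero] at this
          exact this.const_mul 2
        exact (Real.continuous_exp.tendsto _).comp h1
      have htotal : Tendsto (fun k : ℕ => f (t/(k+2)) * Real.exp (2*(t - t/(k+2))) +
          C * (Real.exp (2*(t - t/(k+2))) - 1)) atTop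
          (𝓝 (f 0 * Real.exp (2*t) + C * (Real.exp (2*t) - 1))) := by
        exact (hfsk.mul hexp).add ((hexp.sub tendsto_const_nhds).const_mul C)
      have hft : f t ≤ f 0 * Real.exp (2*t) + C * (Real.exp (2*t) - 1) :=
        ge_of_tendsto htotal (Eventually.of_forall hkey)
      -- f 0 ≤ √ψ0 + √η
      have hf0 : f 0 ≤ Real.sqrt (psiF u1 u2 0) + Real.sqrt η := by
        have h1 : psiF u1 u2 0 + η ≤ (Real.sqrt (psiF u1 u2 0) + Real.sqrt η)^2 := by
          nlinarith [Real.sq_sqrt (hψ0 0), Real.sq_sqrt hη.le,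
            Real.sqrt_nonneg (psiF u1 u2 0), Real.sqrt_nonneg η]
        calc f 0 ≤ Real.sqrt ((Real.sqrt (psiF u1 u2 0) + Real.sqrt η)^2) :=
              Real.sqrt_le_sqrt h1
        _ = Real.sqrt (psiF u1 u2 0) + Real.sqrt η :=
              Real.sqrt_sq (by positivity)
      have hψtf : Real.sqrt (psiF u1 u2 t) ≤ f t :=
        Real.sqrt_le_sqrt (by linarith)
      have hexp1 : (1:ℝ) ≤ Real.exp (2*t) := by
        rw [← Real.exp_zero]; exact Real.exp_le_exp.mpr (by linarith)
      have hexppos : (0:ℝ) < Real.exp (2*t) := Real.exp_pos _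
      nlinarith [hft, hf0, hψtf, Real.sqrt_nonneg η, Real.sqrt_nonneg (psiF u1 u2 0)]
    -- let η → 0
    have hmain : Real.sqrt (psiF u1 u2 t) ≤
        (Real.sqrt (psiF u1 u2 0) + C) * Real.exp (2*t) := by
      refine le_of_forall_pos_le_add fun ε hε => ?_
      have hexppos : (0:ℝ) < Real.exp (2*t) := Real.exp_pos _
      set η := (ε / Real.exp (2*t))^2 with hηdef
      have hηpos : 0 < η := by positivity
      have hsqη : Real.sqrt η = ε / Real.exp (2*t) := Real.sqrt_sq (by positivity)
      have := claim η hηpos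
      rw [hsqη] at this
      calc Real.sqrt (psiF u1 u2 t) ≤
          (Real.sqrt (psiF u1 u2 0) + ε / Real.exp (2*t) + C) * Real.exp (2*t) := this
      _ = (Real.sqrt (psiF u1 u2 0) + C) * Real.exp (2*t) + ε := by
          field_simp
          ring
    rw [hL2t, ← hg]
    have hmono : Real.exp (2*t) ≤ Real.exp (2*T) := Real.exp_le_exp.mpr (by linarith [ht.2])
    calc Real.sqrt (psiF u1 u2 t) ≤
        (Real.sqrt (psiF u1 u2 0) + C) * Real.exp (2*t) := hmain
    _ ≤ (Real.sqrt (psiF u1 u2 0) + C) * Real.exp (2*T) :=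
        mul_le_mul_of_nonneg_left hmono (add_nonneg (Real.sqrt_nonneg _) hC0)




lemma stepIdx_meas {n : ℕ} (hn : 0 < n) : Measurable (stepIdx n hn) := by
  have hmono : Monotone (fun x : ℝ => min (n-1) (Nat.ceil ((n:ℝ)*x) - 1)) := by
    intro a b hab
    refine min_le_min le_rfl ?_
    have h1 : (n:ℝ)*a ≤ (n:ℝ)*b := by
      apply mul_le_mul_of_nonneg_left hab (by positivity)
    exact Nat.sub_le_sub_right (Nat.ceil_le_ceil h1) 1
  have hmeasN : Measurable (fun x : ℝ => min (n-1) (Nat.ceil ((n:ℝ)*x) - 1)) :=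
    hmono.measurable
  refine measurable_to_countable' fun i => ?_
  have : stepIdx n hn ⁻¹' {i} =
      (fun x : ℝ => min (n-1) (Nat.ceil ((n:ℝ)*x) - 1)) ⁻¹' {(i : ℕ)} := by
    ext x
    simp only [mem_preimage, mem_singleton_iff, stepIdx]
    constructor
    · intro h; rw [← h]
    · intro h; exact Fin.ext h
  rw [this]
  exact hmeasN (measurableSet_singleton _)

lemma stepKer_meas {n : ℕ} (hn : 0 < n) (A : Fin n → Fin n → ℝ) :
    Measurable (Function.uncurry (stepKer hn A)) := by
  have h1 : Measurable (fun p : ℝ × ℝ => (stepIdx n hn p.1, stepIdx n hn p.2)) :=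
    ((stepIdx_meas hn).comp measurable_fst).prodMk ((stepIdx_meas hn).comp measurable_snd)
  exact (measurable_of_countable (fun q : Fin n × Fin n => A q.1 q.2)).comp h1

lemma stepKer_bdd {n : ℕ} (hn : 0 < n) {A : Fin n → Fin n → ℝ}
    (hA : ∀ i j, A i j = -1 ∨ A i j = 0 ∨ A i j = 1) :
    ∀ x y, |stepKer hn A x y| ≤ 1 := by
  intro x y
  rcases hA (stepIdx n hn x) (stepIdx n hn y) with h | h | h <;>
    · rw [stepKer, h]; norm_num

/-- convergence error estimate for the repelling dynamics:
`‖u(·,t) − uₙ(·,t)‖₂ ≤ (‖g − gₙ‖₂ + C_u ‖T_W − T_{Wₙ}‖_op) e^{2T}` on `[0,T]`. -/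
theorem repelling_error_estimate (W : ℝ → ℝ → ℝ) (g : ℝ → ℝ) (T mg : ℝ) (hT : 0 ≤ T)
    (hWm : Measurable (Function.uncurry W)) (hsym : ∀ x y, W x y = W y x)
    (hW1 : ∀ x y, W x y ∈ Set.Icc (-1 : ℝ) 1)
    (hgm : Measurable g) (hgb : ∀ x, |g x| ≤ mg)
    (n : ℕ) (hn : 0 < n) (A : Fin n → Fin n → ℝ)
    (hA : ∀ i j, A i j = -1 ∨ A i j = 0 ∨ A i j = 1)
    (hAsym : ∀ i j, A i j = A j i) (gvec : Fin n → ℝ)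
    (u un : ℝ → ℝ → ℝ)
    (hu : IsRepellingSol W g u)
    (hun : IsRepellingSol (stepKer hn A) (stepFun hn gvec) un) :
    ∀ t ∈ Set.Icc (0 : ℝ) T,
      L2norm (fun x => u x t - un x t) ≤
        (L2norm (fun x => g x - stepFun hn gvec x) +
          CuT u T * opNorm (fun x y => W x y - stepKer hn A x y)) *
        Real.exp (2 * T) := by
  have hWb : ∀ x y, |W x y| ≤ 1 := fun x y => abs_le.mpr ⟨(hW1 x y).1, (hW1 x y).2⟩
  have hKb : ∀ x y, |stepKer hn A x y| ≤ 1 := stepKer_bdd hn hA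
  have hD2 : ∀ x y, |W x y - stepKer hn A x y| ≤ 2 := by
    intro x y
    calc |W x y - stepKer hn A x y| ≤ |W x y| + |stepKer hn A x y| := abs_sub _ _
    _ ≤ 2 := by linarith [hWb x y, hKb x y]
  rcases eq_or_lt_of_le hT with h0 | hTpos
  · -- T = 0
    intro t ht
    have ht0 : t = 0 := le_antisymm (ht.2.trans_eq h0.symm) ht.1
    subst ht0
    have hL : L2norm (fun x => u x 0 - un x 0) = L2norm (fun x => g x - stepFun hn gvec x) := by
      rw [L2norm, L2norm]
      congr 1
      refine setIntegral_congr_fun measurableSet_I01 fun x hx => ?_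
      rw [hu.1 x hx, hun.1 x hx]
    rw [hL, ← h0]
    have hexp : Real.exp (2*(0:ℝ)) = 1 := by norm_num
    rw [hexp, mul_one]
    have h1 : 0 ≤ CuT u 0 * opNorm (fun x y => W x y - stepKer hn A x y) :=
      mul_nonneg (CuT_nonneg _ _) (opNorm_nonneg hD2)
    linarith
  · exact master hTpos hWm (stepKer_meas hn A) hWb hKb hu hun
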